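/- arXiv:1504.08321 — 6 statements merged into one kernel-verified Lean document; each statement's English description precedes it below -/
import Mathlib

section
/- Completeness of CP with respect to evaluation tree semantics: for all conditional statements P, Q over atoms A, CP proves P = Q if and only if se(P) = se(Q). -/
inductive CS (A : Type) : Type
  | tt : CS A
  | ff : CS A
  | atom : A → CS A
  | cond : CS A → CS A → CS A → CS A

namespace CS

variable {A : Type}

/-- Basic forms: the central condition is always an atom. -/
inductive IsBasic : CS A → Prop
  | tt : IsBasic tt
  | ff : IsBasic ff
  | cond {p q : CS A} (a : A) : IsBasic p → IsBasic q → IsBasic (cond p (atom a) q)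

/-- Provability from the axioms CP of proposition algebra. `cond x y z` is x ◁ y ▷ z. -/
inductive CP : CS A → CS A → Prop
  | refl (p : CS A) : CP p p
  | symm {p q} : CP p q → CP q p
  | trans {p q r} : CP p q → CP q r → CP p r
  | congr {p p' q q' r r'} :
      CP p p' → CP q q' → CP r r' → CP (.cond p q r) (.cond p' q' r')
  | cp1 (x y : CS A) : CP (.cond x .tt y) x
  | cp2 (x y : CS A) : CP (.cond x .ff y) y
  | cp3 (x : CS A) : CP (.cond .tt x .ff) x
  | cp4 (x y z u v : CS A) :
      CP (.cond x (.cond y z u) v) (.cond (.cond x y v) z (.cond x u v))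

/-- Evaluation trees with leaves T, F and internal nodes labeled by atoms. -/
inductive ET (A : Type) : Type
  | tt : ET A
  | ff : ET A
  | node : ET A → A → ET A → ET A

/-- Leaf replacement X[T↦Y, F↦Z] on evaluation trees. -/
def ET.repl : ET A → ET A → ET A → ET A
  | .tt, y, _ => y
  | .ff, _, z => z
  | .node l a r, y, z => .node (ET.repl l y z) a (ET.repl r y z)

/-- Short-circuit evaluation into evaluation trees. -/
def se : CS A → ET A
  | .tt => .tt
  | .ff => .ff
  | .atom a => .node .tt a .ff
  | .cond p q r => ET.repl (se q) (se p) (se r)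

/-- Syntactic leaf replacement P[T↦Q, F↦R] on (basic) conditional statements. -/
def srepl : CS A → CS A → CS A → CS A
  | .tt, y, _ => y
  | .ff, _, z => z
  | .atom a, _, _ => .atom a
  | .cond p c q, y, z => .cond (srepl p y z) c (srepl q y z)

/-- The basic form function. -/
def bf : CS A → CS A
  | .tt => .tt
  | .ff => .ff
  | .atom a => .cond .tt (.atom a) .ff
  | .cond p q r => srepl (bf q) (bf p) (bf r)

/-- Depth of a basic form. -/
def d : CS A → ℕ
  | .cond p _ r => 1 + max (d p) (d r)
  | _ => 0

end CS
namespace CS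
variable {A : Type} [DecidableEq A]
def fA (a : A) : CS A → CS A
  | .cond p (.atom b) q => if b = a then .cond (fA a p) (.atom a) (fA a p) else .cond p (.atom b) q
  | x => x
def gA (a : A) : CS A → CS A
  | .cond p (.atom b) q => if b = a then .cond (gA a q) (.atom a) (gA a q) else .cond p (.atom b) q
  | x => x
theorem d_fA (a : A) : ∀ p : CS A, d (fA a p) ≤ d p
  | .tt => le_refl _
  | .ff => le_refl _
  | .atom _ => le_refl _
  | .cond p .tt q => le_refl _
  | .cond p .ff q => le_refl _
  | .cond p (.atom b) q => by
      by_cases h : b = a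
      · have ih := d_fA a p
        simp only [fA, h, if_true, d]
        omega
      · simp [fA, h]
  | .cond p (.cond x y z) q => le_refl _
theorem d_gA (a : A) : ∀ p : CS A, d (gA a p) ≤ d p
  | .tt => le_refl _
  | .ff => le_refl _
  | .atom _ => le_refl _
  | .cond p .tt q => le_refl _
  | .cond p .ff q => le_refl _
  | .cond p (.atom b) q => by
      by_cases h : b = a
      · have ih := d_gA a q
        simp only [gA, h, if_true, d]
        omega
      · simp [gA, h]
  | .cond p (.cond x y z) q => le_refl _
def rpf : CS A → CS A
  | .cond p (.atom a) q => .cond (rpf (fA a p)) (.atom a) (rpf (gA a q))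
  | x => x
termination_by p => d p
decreasing_by
  · have := d_fA a p; simp only [d]; omega
  · have := d_gA a q; simp only [d]; omega
end CS
namespace CS
variable {A : Type} [DecidableEq A]

/-- Memorizing auxiliary function ℓ_a on basic forms. -/
def lA (a : A) : CS A → CS A
  | .cond p (.atom b) q => if b = a then lA a p else .cond (lA a p) (.atom b) (lA a q)
  | x => x

/-- Memorizing auxiliary function r_a on basic forms. -/
def rA (a : A) : CS A → CS A
  | .cond p (.atom b) q => if b = a then rA a q else .cond (rA a p) (.atom b) (rA a q)
  | x => x

theorem d_lA (a : A) : ∀ p : CS A, d (lA a p) ≤ d p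
  | .tt => le_refl _
  | .ff => le_refl _
  | .atom _ => le_refl _
  | .cond p .tt q => le_refl _
  | .cond p .ff q => le_refl _
  | .cond p (.atom b) q => by
      by_cases h : b = a
      · have ih := d_lA a p
        simp only [lA, h, if_true, d]
        omega
      · have ih1 := d_lA a p
        have ih2 := d_lA a q
        simp only [lA, h, if_false, d]
        omega
  | .cond p (.cond x y z) q => le_refl _

theorem d_rA (a : A) : ∀ p : CS A, d (rA a p) ≤ d p
  | .tt => le_refl _
  | .ff => le_refl _
  | .atom _ => le_refl _
  | .cond p .tt q => le_refl _
  | .cond p .ff q => le_refl _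
  | .cond p (.atom b) q => by
      by_cases h : b = a
      · have ih := d_rA a q
        simp only [rA, h, if_true, d]
        omega
      · have ih1 := d_rA a p
        have ih2 := d_rA a q
        simp only [rA, h, if_false, d]
        omega
  | .cond p (.cond x y z) q => le_refl _

/-- The function mf transforming basic forms into mem-basic forms. -/
def mf : CS A → CS A
  | .cond p (.atom a) q => .cond (mf (lA a p)) (.atom a) (mf (rA a q))
  | x => x
termination_by p => d p
decreasing_by
  · have := d_lA a p; simp only [d]; omega
  · have := d_rA a q; simp only [d]; omega

/-- Depth of an evaluation tree. -/
def ET.d : ET A → ℕ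
  | .node l _ r => 1 + max (ET.d l) (ET.d r)
  | _ => 0

/-- Repetition-proof auxiliary transformation F_a on evaluation trees. -/
def ET.FA (a : A) : ET A → ET A
  | .node l b r => if b = a then .node (ET.FA a l) a (ET.FA a l) else .node l b r
  | x => x

/-- Repetition-proof auxiliary transformation G_a on evaluation trees. -/
def ET.GA (a : A) : ET A → ET A
  | .node l b r => if b = a then .node (ET.GA a r) a (ET.GA a r) else .node l b r
  | x => x

theorem ET.d_FA (a : A) : ∀ x : ET A, ET.d (ET.FA a x) ≤ ET.d x
  | .tt => le_refl _
  | .ff => le_refl _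
  | .node l b r => by
      by_cases h : b = a
      · have ih := ET.d_FA a l
        simp only [ET.FA, h, if_true, ET.d]
        omega
      · simp [ET.FA, h]

theorem ET.d_GA (a : A) : ∀ x : ET A, ET.d (ET.GA a x) ≤ ET.d x
  | .tt => le_refl _
  | .ff => le_refl _
  | .node l b r => by
      by_cases h : b = a
      · have ih := ET.d_GA a r
        simp only [ET.GA, h, if_true, ET.d]
        omega
      · simp [ET.GA, h]

/-- The transformation rp on evaluation trees. -/
def ET.rp : ET A → ET A
  | .node l a r => .node (ET.rp (ET.FA a l)) a (ET.rp (ET.GA a r))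
  | x => x
termination_by x => ET.d x
decreasing_by
  · have := ET.d_FA a l; simp only [ET.d]; omega
  · have := ET.d_GA a r; simp only [ET.d]; omega

end CS
namespace CS
variable {A : Type}

/-- Side condition for rp-basic forms: a non-constant immediate subterm of a node
labeled `a` either has central condition different from `a`, or equal outer arguments. -/
def SideOk (a : A) : CS A → Prop
  | .tt => True
  | .ff => True
  | .cond p (.atom b) q => b ≠ a ∨ p = q
  | _ => False

/-- Rp-basic forms. -/
inductive IsRpBasic : CS A → Prop
  | tt : IsRpBasic tt
  | ff : IsRpBasic ff
  | cond {p q : CS A} (a : A) : IsRpBasic p → IsRpBasic q →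
      SideOk a p → SideOk a q → IsRpBasic (cond p (atom a) q)

/-- Mem-basic forms over a subset A' of the atoms. -/
inductive IsMemBasicOver : Set A → CS A → Prop
  | tt (A' : Set A) : IsMemBasicOver A' tt
  | ff (A' : Set A) : IsMemBasicOver A' ff
  | cond {A' : Set A} {p q : CS A} (a : A) : a ∈ A' →
      IsMemBasicOver (A' \ {a}) p → IsMemBasicOver (A' \ {a}) q →
      IsMemBasicOver A' (cond p (atom a) q)

/-- Mem-basic forms. -/
def IsMemBasic (p : CS A) : Prop := ∃ A' : Set A, IsMemBasicOver A' p

/-- Provability from CPrp: CP plus the repetition-proof axiom schemes. -/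
inductive CPrp : CS A → CS A → Prop
  | refl (p : CS A) : CPrp p p
  | symm {p q} : CPrp p q → CPrp q p
  | trans {p q r} : CPrp p q → CPrp q r → CPrp p r
  | congr {p p' q q' r r'} :
      CPrp p p' → CPrp q q' → CPrp r r' → CPrp (.cond p q r) (.cond p' q' r')
  | cp1 (x y : CS A) : CPrp (.cond x .tt y) x
  | cp2 (x y : CS A) : CPrp (.cond x .ff y) y
  | cp3 (x : CS A) : CPrp (.cond .tt x .ff) x
  | cp4 (x y z u v : CS A) :
      CPrp (.cond x (.cond y z u) v) (.cond (.cond x y v) z (.cond x u v))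
  | rp1 (a : A) (x y z : CS A) :
      CPrp (.cond (.cond x (.atom a) y) (.atom a) z)
           (.cond (.cond x (.atom a) x) (.atom a) z)
  | rp2 (a : A) (x y z : CS A) :
      CPrp (.cond x (.atom a) (.cond y (.atom a) z))
           (.cond x (.atom a) (.cond z (.atom a) z))

/-- Provability from CPmem: CP plus the memorizing axiom. -/
inductive CPmem : CS A → CS A → Prop
  | refl (p : CS A) : CPmem p p
  | symm {p q} : CPmem p q → CPmem q p
  | trans {p q r} : CPmem p q → CPmem q r → CPmem p r
  | congr {p p' q q' r r'} :
      CPmem p p' → CPmem q q' → CPmem r r' → CPmem (.cond p q r) (.cond p' q' r')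
  | cp1 (x y : CS A) : CPmem (.cond x .tt y) x
  | cp2 (x y : CS A) : CPmem (.cond x .ff y) y
  | cp3 (x : CS A) : CPmem (.cond .tt x .ff) x
  | cp4 (x y z u v : CS A) :
      CPmem (.cond x (.cond y z u) v) (.cond (.cond x y v) z (.cond x u v))
  | mem (x y z u v w : CS A) :
      CPmem (.cond x y (.cond z u (.cond v y w))) (.cond x y (.cond z u w))

end CS

/-!
Soundness: `se` respects every axiom of CP, because leaf replacement on evaluation trees is
associative (which gives CP4) and replacing T by T and F by F is the identity (CP3).

Completeness: every conditional statement is CP-equal to its basic form `bf P`, and `se` is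
injective on basic forms, since it maps `p ◁ a ▷ q` to the tree with root `a` and subtrees
`se p`, `se q`. Hence `se P = se Q` forces `bf P = bf Q`, and `P = bf P = bf Q = Q` in CP.
-/

namespace CS

variable {A : Type}

@[simp]
theorem ET.repl_tt_ff : ∀ x : ET A, x.repl .tt .ff = x
  | .tt => rfl
  | .ff => rfl
  | .node l a r => by simp only [ET.repl, ET.repl_tt_ff l, ET.repl_tt_ff r]

theorem ET.repl_repl : ∀ x y z u v : ET A,
    (x.repl y z).repl u v = x.repl (y.repl u v) (z.repl u v)
  | .tt, _, _, _, _ => rfl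
  | .ff, _, _, _, _ => rfl
  | .node l a r, y, z, u, v => by
      simp only [ET.repl, ET.repl_repl l y z u v, ET.repl_repl r y z u v]

theorem CP.se_eq {P Q : CS A} (h : CP P Q) : se P = se Q := by
  induction h with
  | refl => rfl
  | symm _ ih => exact ih.symm
  | trans _ _ ih₁ ih₂ => exact ih₁.trans ih₂
  | congr _ _ _ ih₁ ih₂ ih₃ => simp only [se, ih₁, ih₂, ih₃]
  | cp1 | cp2 => rfl
  | cp3 x => exact ET.repl_tt_ff (se x)
  | cp4 x y z u v => exact ET.repl_repl (se z) (se y) (se u) (se x) (se v)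

theorem IsBasic.srepl {y p r : CS A} (hy : IsBasic y) (hp : IsBasic p) (hr : IsBasic r) :
    IsBasic (srepl y p r) := by
  induction hy with
  | tt => exact hp
  | ff => exact hr
  | cond a _ _ ih₁ ih₂ => exact .cond a ih₁ ih₂

theorem isBasic_bf : ∀ P : CS A, IsBasic (bf P)
  | .tt => .tt
  | .ff => .ff
  | .atom a => .cond a .tt .ff
  | .cond p q r => (isBasic_bf q).srepl (isBasic_bf p) (isBasic_bf r)

theorem CP.cond_srepl {y : CS A} (hy : IsBasic y) (p r : CS A) :
    CP (.cond p y r) (srepl y p r) := by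
  induction hy with
  | tt => exact .cp1 p r
  | ff => exact .cp2 p r
  | cond a _ _ ih₁ ih₂ => exact (CP.cp4 _ _ _ _ _).trans (.congr ih₁ (.refl _) ih₂)

theorem CP.self_bf : ∀ P : CS A, CP P (bf P)
  | .tt => .refl _
  | .ff => .refl _
  | .atom _ => .symm (.cp3 _)
  | .cond p q r =>
      (CP.congr (self_bf p) (self_bf q) (self_bf r)).trans (cond_srepl (isBasic_bf q) _ _)

theorem IsBasic.eq_of_se_eq {p q : CS A} (hp : IsBasic p) (hq : IsBasic q) (h : se p = se q) :
    p = q := by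
  induction hp generalizing q with
  | tt | ff => cases hq <;> simp_all [se, ET.repl]
  | cond a _ _ ih₁ ih₂ =>
      cases hq with
      | tt | ff => simp [se, ET.repl] at h
      | cond b hq₁ hq₂ =>
          simp only [se, ET.repl, ET.node.injEq] at h
          obtain ⟨h₁, rfl, h₂⟩ := h
          rw [ih₁ hq₁ h₁, ih₂ hq₂ h₂]

theorem bf_eq_of_se_eq {P Q : CS A} (h : se P = se Q) : bf P = bf Q :=
  (isBasic_bf P).eq_of_se_eq (isBasic_bf Q)
    ((CP.self_bf P).se_eq.symm.trans (h.trans (CP.self_bf Q).se_eq))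

end CS

theorem stmt4 {A : Type} (P Q : CS A) :
    CS.CP P Q ↔ CS.se P = CS.se Q :=
  ⟨CS.CP.se_eq, fun h => (CS.CP.self_bf P).trans (CS.bf_eq_of_se_eq h ▸ (CS.CP.self_bf Q).symm)⟩
end

section
/- For the auxiliary repetition-proof functions f_a and g_a on basic forms: g_a(f_a(P)) = f_a(f_a(P)) = f_a(P) and f_a(g_a(P)) = g_a(g_a(P)) = g_a(P), for every atom a and basic form P. -/
namespace CS
variable {A : Type} [DecidableEq A]

theorem fA_fA (a : A) (p : CS A) : fA a (fA a p) = fA a p := by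
  fun_induction fA a p <;> simp_all [fA]

theorem gA_fA (a : A) (p : CS A) : gA a (fA a p) = fA a p := by
  fun_induction fA a p <;> simp_all [gA]

theorem gA_gA (a : A) (p : CS A) : gA a (gA a p) = gA a p := by
  fun_induction gA a p <;> simp_all [gA]

theorem fA_gA (a : A) (p : CS A) : fA a (gA a p) = gA a p := by
  fun_induction gA a p <;> simp_all [fA]

end CS

theorem stmt9_general {A : Type} [DecidableEq A] (a : A) (P : CS A) :
    CS.gA a (CS.fA a P) = CS.fA a P ∧ CS.fA a (CS.fA a P) = CS.fA a P ∧
    CS.fA a (CS.gA a P) = CS.gA a P ∧ CS.gA a (CS.gA a P) = CS.gA a P :=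
  ⟨CS.gA_fA a P, CS.fA_fA a P, CS.fA_gA a P, CS.gA_gA a P⟩

theorem stmt9 {A : Type} [DecidableEq A] (a : A) (P : CS A) (hP : CS.IsBasic P) :
    CS.gA a (CS.fA a P) = CS.fA a P ∧ CS.fA a (CS.fA a P) = CS.fA a P ∧
    CS.fA a (CS.gA a P) = CS.gA a P ∧ CS.gA a (CS.gA a P) = CS.gA a P :=
  stmt9_general a P
end

section
/- The tree transformation rp commutes with short-circuit evaluation of repetition-proof normalization: for every basic form P, rp(se(P)) = se(rpf(P)). -/
/-! On a basic form, `se (P ◁ a ▷ Q)` is the tree `se P ◁ a ▷ se Q`, and `se` turns the syntactic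
maps `f_a`, `g_a` into the tree maps `F_a`, `G_a`. Hence `rp ∘ se` and `se ∘ rpf` obey the same
recursion, and they agree by induction on the depth of the basic form. -/

namespace CS
variable {A : Type}

@[simp]
theorem se_cond_atom (p q : CS A) (a : A) : se (.cond p (.atom a) q) = .node (se p) a (se q) :=
  rfl

variable [DecidableEq A]

theorem IsBasic.fA (a : A) {p : CS A} (h : IsBasic p) : IsBasic (fA a p) := by
  induction h with
  | tt => exact .tt
  | ff => exact .ff
  | cond b hp hq ihp _ =>
    by_cases hb : b = a
    · subst hb; simpa [CS.fA] using .cond b ihp ihp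
    · simpa [CS.fA, hb] using .cond b hp hq

theorem IsBasic.gA (a : A) {p : CS A} (h : IsBasic p) : IsBasic (gA a p) := by
  induction h with
  | tt => exact .tt
  | ff => exact .ff
  | cond b hp hq _ ihq =>
    by_cases hb : b = a
    · subst hb; simpa [CS.gA] using .cond b ihq ihq
    · simpa [CS.gA, hb] using .cond b hp hq

theorem se_fA (a : A) {p : CS A} (h : IsBasic p) : se (fA a p) = ET.FA a (se p) := by
  induction h with
  | tt | ff => rfl
  | cond b _ _ ihp _ =>
    by_cases hb : b = a
    · simp [fA, ET.FA, hb, ihp]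
    · simp [fA, ET.FA, hb]

theorem se_gA (a : A) {p : CS A} (h : IsBasic p) : se (gA a p) = ET.GA a (se p) := by
  induction h with
  | tt | ff => rfl
  | cond b _ _ _ ihq =>
    by_cases hb : b = a
    · simp [gA, ET.GA, hb, ihq]
    · simp [gA, ET.GA, hb]

theorem rp_se : ∀ {P : CS A}, IsBasic P → ET.rp (se P) = se (rpf P)
  | _, .tt => by simp [se, rpf, ET.rp]
  | _, .ff => by simp [se, rpf, ET.rp]
  | .cond p _ q, .cond a hp hq => by
    rw [se_cond_atom, ET.rp, rpf, se_cond_atom, ← se_fA a hp, ← se_gA a hq,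
      rp_se (hp.fA a), rp_se (hq.gA a)]
termination_by P => d P
decreasing_by
  · have := d_fA a p; simp only [d]; omega
  · have := d_gA a q; simp only [d]; omega

end CS

theorem stmt14 {A : Type} [DecidableEq A] (P : CS A) (hP : CS.IsBasic P) :
    CS.ET.rp (CS.se P) = CS.se (CS.rpf P) :=
  CS.rp_se hP
end

section
/- For the memorizing auxiliary functions, ℓ_a and r_a commute for distinct atoms: if a ≠ b then ℓ_a(ℓ_b(P)) = ℓ_b(ℓ_a(P)), r_a(ℓ_b(P)) = ℓ_b(r_a(P)), r_a(r_b(P)) = r_b(r_a(P)), and ℓ_a(r_b(P)) = r_b(ℓ_a(P)), for all basic forms P. -/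
namespace CS

variable {A : Type} [DecidableEq A] {a b : A}

@[simp] theorem lA_cond_atom_self (a : A) (p q : CS A) : lA a (cond p (atom a) q) = lA a p := by
  simp [lA]

theorem lA_cond_atom_of_ne (h : b ≠ a) (p q : CS A) :
    lA a (cond p (atom b) q) = cond (lA a p) (atom b) (lA a q) := by
  simp [lA, h]

@[simp] theorem rA_cond_atom_self (a : A) (p q : CS A) : rA a (cond p (atom a) q) = rA a q := by
  simp [rA]

theorem rA_cond_atom_of_ne (h : b ≠ a) (p q : CS A) :
    rA a (cond p (atom b) q) = cond (rA a p) (atom b) (rA a q) := by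
  simp [rA, h]

-- `lA` and `rA` fix every term whose central condition is not an atom.
theorem lA_comm (h : a ≠ b) (p : CS A) : lA a (lA b p) = lA b (lA a p) := by
  induction p with
  | cond p c q ihp _ ihq =>
    cases c with
    | atom c =>
      by_cases hca : c = a
      · subst hca
        simp [lA_cond_atom_of_ne h, ihp]
      · by_cases hcb : c = b
        · subst hcb
          simp [lA_cond_atom_of_ne hca, ihp]
        · simp [lA_cond_atom_of_ne hca, lA_cond_atom_of_ne hcb, ihp, ihq]
    | _ => simp [lA]
  | _ => simp [lA]

theorem rA_comm (h : a ≠ b) (p : CS A) : rA a (rA b p) = rA b (rA a p) := by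
  induction p with
  | cond p c q ihp _ ihq =>
    cases c with
    | atom c =>
      by_cases hca : c = a
      · subst hca
        simp [rA_cond_atom_of_ne h, ihq]
      · by_cases hcb : c = b
        · subst hcb
          simp [rA_cond_atom_of_ne hca, ihq]
        · simp [rA_cond_atom_of_ne hca, rA_cond_atom_of_ne hcb, ihp, ihq]
    | _ => simp [rA]
  | _ => simp [rA]

theorem lA_rA_comm (h : a ≠ b) (p : CS A) : lA a (rA b p) = rA b (lA a p) := by
  induction p with
  | cond p c q ihp _ ihq =>
    cases c with
    | atom c =>
      by_cases hca : c = a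
      · subst hca
        simp [rA_cond_atom_of_ne h, ihp]
      · by_cases hcb : c = b
        · subst hcb
          simp [lA_cond_atom_of_ne hca, ihq]
        · simp [lA_cond_atom_of_ne hca, rA_cond_atom_of_ne hcb, ihp, ihq]
    | _ => simp [lA, rA]
  | _ => simp [lA, rA]

end CS

theorem stmt15_general {A : Type} [DecidableEq A] (a b : A) (hab : a ≠ b)
    (P : CS A) :
    CS.lA a (CS.lA b P) = CS.lA b (CS.lA a P) ∧
    CS.rA a (CS.lA b P) = CS.lA b (CS.rA a P) ∧
    CS.rA a (CS.rA b P) = CS.rA b (CS.rA a P) ∧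
    CS.lA a (CS.rA b P) = CS.rA b (CS.lA a P) :=
  ⟨CS.lA_comm hab P, (CS.lA_rA_comm hab.symm P).symm, CS.rA_comm hab P, CS.lA_rA_comm hab P⟩

theorem stmt15 {A : Type} [DecidableEq A] (a b : A) (hab : a ≠ b)
    (P : CS A) (hP : CS.IsBasic P) :
    CS.lA a (CS.lA b P) = CS.lA b (CS.lA a P) ∧
    CS.rA a (CS.lA b P) = CS.lA b (CS.rA a P) ∧
    CS.rA a (CS.rA b P) = CS.rA b (CS.rA a P) ∧
    CS.lA a (CS.rA b P) = CS.rA b (CS.lA a P) :=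
  stmt15_general a b hab P
end

section
/- For every conditional statement P, mbf(P) := mf(bf(P)) is a mem-basic form, i.e., a basic form in which no atom occurs twice on any root-to-leaf path. -/
/-! `mf` only ever recurses into `ℓ_a(P)` and `r_a(Q)`, which no longer contain `a`. So if a basic
form uses only atoms from `A'`, then the two branches below an `a`-node of `mf` are basic forms
over `A' \ {a}`, and induction along the recursion of `mf` shows that `mf` of a basic form over
`A'` is mem-basic over `A'`. Since `bf P` is a basic form over all of `A`, `mf (bf P)` is mem-basic. -/

namespace CS

variable {A : Type}

inductive IsBasicOver : Set A → CS A → Prop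
  | tt (A' : Set A) : IsBasicOver A' tt
  | ff (A' : Set A) : IsBasicOver A' ff
  | cond {A' : Set A} {p q : CS A} (a : A) : a ∈ A' →
      IsBasicOver A' p → IsBasicOver A' q → IsBasicOver A' (cond p (atom a) q)

theorem IsBasicOver.srepl {A' : Set A} {p y z : CS A} (hp : IsBasicOver A' p)
    (hy : IsBasicOver A' y) (hz : IsBasicOver A' z) : IsBasicOver A' (srepl p y z) := by
  induction hp with
  | tt => exact hy
  | ff => exact hz
  | cond a ha _ _ ihp ihq => exact .cond a ha ihp ihq

theorem isBasicOver_univ_bf : ∀ p : CS A, IsBasicOver Set.univ (bf p)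
  | .tt => .tt _
  | .ff => .ff _
  | .atom a => .cond a (Set.mem_univ a) (.tt _) (.ff _)
  | .cond p q r =>
      (isBasicOver_univ_bf q).srepl (isBasicOver_univ_bf p) (isBasicOver_univ_bf r)

variable [DecidableEq A]

theorem IsBasicOver.lA {A' : Set A} {p : CS A} (hp : IsBasicOver A' p) (a : A) :
    IsBasicOver (A' \ {a}) (lA a p) := by
  induction hp with
  | tt => exact .tt _
  | ff => exact .ff _
  | cond b hb _ _ ihp ihq =>
    by_cases h : b = a
    · simpa [CS.lA, h] using ihp
    · simpa [CS.lA, h] using IsBasicOver.cond b (Set.mem_sdiff_singleton.mpr ⟨hb, h⟩) ihp ihq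

theorem IsBasicOver.rA {A' : Set A} {p : CS A} (hp : IsBasicOver A' p) (a : A) :
    IsBasicOver (A' \ {a}) (rA a p) := by
  induction hp with
  | tt => exact .tt _
  | ff => exact .ff _
  | cond b hb _ _ ihp ihq =>
    by_cases h : b = a
    · simpa [CS.rA, h] using ihq
    · simpa [CS.rA, h] using IsBasicOver.cond b (Set.mem_sdiff_singleton.mpr ⟨hb, h⟩) ihp ihq

theorem IsBasicOver.isMemBasicOver_mf {A' : Set A} {p : CS A} (hp : IsBasicOver A' p) :
    IsMemBasicOver A' (mf p) := by
  induction p using mf.induct generalizing A' with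
  | case1 p a q ihp ihq =>
    obtain _ | _ | ⟨_, ha, hp, hq⟩ := hp
    rw [mf]
    exact .cond a ha (ihp (hp.lA a)) (ihq (hq.rA a))
  | case2 x hx =>
    rw [mf.eq_2 x hx]
    cases hp with
    | tt => exact .tt _
    | ff => exact .ff _
    | cond a _ _ _ => exact (hx _ a _ rfl).elim

end CS

theorem stmt16 {A : Type} [DecidableEq A] (P : CS A) :
    CS.IsMemBasic (CS.mf (CS.bf P)) :=
  ⟨Set.univ, (CS.isBasicOver_univ_bf P).isMemBasicOver_mf⟩
end

section
/- For every basic form P, the axiom system CPmem (CP extended with the axiom x◁y▷(z◁u▷(v◁y▷w)) = x◁y▷(z◁u▷w)) proves P = mf(P). -/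
namespace CS

local notation:70 x:71 " ◁ " y:71 " ▷ " z:71 => CS.cond x y z

local infix:50 " ≐ " => CPmem

variable {A : Type}

instance : Trans (@CPmem A) (@CPmem A) (@CPmem A) := ⟨CPmem.trans⟩

namespace CPmem

theorem congr_left {p p' : CS A} (h : p ≐ p') (y r : CS A) : p ◁ y ▷ r ≐ p' ◁ y ▷ r :=
  .congr h (.refl y) (.refl r)

theorem congr_right (p y : CS A) {r r' : CS A} (h : r ≐ r') : p ◁ y ▷ r ≐ p ◁ y ▷ r' :=
  .congr (.refl p) (.refl y) h

theorem swap (x y z : CS A) : x ◁ y ▷ z ≐ z ◁ (.ff ◁ y ▷ .tt) ▷ x :=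
  .symm (.trans (.cp4 z .ff y .tt x) (.congr (.cp2 z x) (.refl y) (.cp1 z x)))

theorem right_cond_self (x y v w : CS A) : x ◁ y ▷ (v ◁ y ▷ w) ≐ x ◁ y ▷ w :=
  .trans (congr_right x y (.symm (.cp2 .tt _)))
    (.trans (.mem x y .tt .ff v w) (congr_right x y (.cp2 .tt w)))

theorem right_left_cond_self (x y v w u z : CS A) :
    x ◁ y ▷ ((v ◁ y ▷ w) ◁ u ▷ z) ≐ x ◁ y ▷ (w ◁ u ▷ z) :=
  .trans (congr_right x y (swap _ u z))
    (.trans (.mem x y z _ v w) (congr_right x y (.symm (swap w u z))))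

theorem left_cond_self (v y w x : CS A) : (v ◁ y ▷ w) ◁ y ▷ x ≐ v ◁ y ▷ x :=
  .trans (swap _ y x) <| .trans (congr_right x _ (swap v y w)) <|
    .trans (right_cond_self x _ w v) (.symm (swap v y x))

theorem left_right_cond_self (z u v y w x : CS A) :
    (z ◁ u ▷ (v ◁ y ▷ w)) ◁ y ▷ x ≐ (z ◁ u ▷ v) ◁ y ▷ x :=
  .trans (swap _ y x) <| .trans (congr_right x _ (congr_right z u (swap v y w))) <|
    .trans (.mem x _ z u w v) (.symm (swap _ y x))

theorem left_left_cond_self (v y w u z x : CS A) :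
    ((v ◁ y ▷ w) ◁ u ▷ z) ◁ y ▷ x ≐ (v ◁ u ▷ z) ◁ y ▷ x :=
  .trans (swap _ y x) <| .trans (congr_right x _ (congr_left (swap v y w) u z)) <|
    .trans (right_left_cond_self x _ w v u z) (.symm (swap _ y x))

variable [DecidableEq A]

theorem cond_lA (a : A) (p s : CS A) : p ◁ .atom a ▷ s ≐ lA a p ◁ .atom a ▷ s := by
  induction p using lA.induct a generalizing s with
  | case1 x y ihx =>
    simpa only [lA.eq_1, if_pos] using (left_cond_self x _ y s).trans (ihx s)
  | case2 x b y hba ihx ihy =>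
    rw [lA.eq_1, if_neg hba]
    -- the induction hypotheses only speak about tests of `a`, so each branch is first wrapped
    -- in a test of `a` that the depth-two laws can remove again
    calc (x ◁ .atom b ▷ y) ◁ .atom a ▷ s
        ≐ ((x ◁ .atom a ▷ lA a x) ◁ .atom b ▷ y) ◁ .atom a ▷ s := .symm (left_left_cond_self ..)
      _ ≐ ((lA a x ◁ .atom a ▷ lA a x) ◁ .atom b ▷ y) ◁ .atom a ▷ s :=
          congr_left (congr_left (ihx _) _ _) _ _
      _ ≐ (lA a x ◁ .atom b ▷ (y ◁ .atom a ▷ lA a y)) ◁ .atom a ▷ s :=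
          (left_left_cond_self ..).trans (.symm (left_right_cond_self ..))
      _ ≐ (lA a x ◁ .atom b ▷ (lA a y ◁ .atom a ▷ lA a y)) ◁ .atom a ▷ s :=
          congr_left (congr_right _ _ (ihy _)) _ _
      _ ≐ (lA a x ◁ .atom b ▷ lA a y) ◁ .atom a ▷ s := left_right_cond_self ..
  | case3 x hx => rw [lA.eq_2 a x hx]; exact .refl _

theorem cond_rA (a : A) (s q : CS A) : s ◁ .atom a ▷ q ≐ s ◁ .atom a ▷ rA a q := by
  induction q using rA.induct a generalizing s with
  | case1 x y ihy =>
    simpa only [rA.eq_1, if_pos] using (right_cond_self s _ x y).trans (ihy s)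
  | case2 x b y hba ihx ihy =>
    rw [rA.eq_1, if_neg hba]
    calc s ◁ .atom a ▷ (x ◁ .atom b ▷ y)
        ≐ s ◁ .atom a ▷ ((x ◁ .atom a ▷ x) ◁ .atom b ▷ y) := .symm (right_left_cond_self ..)
      _ ≐ s ◁ .atom a ▷ ((x ◁ .atom a ▷ rA a x) ◁ .atom b ▷ y) :=
          congr_right _ _ (congr_left (ihx _) _ _)
      _ ≐ s ◁ .atom a ▷ (rA a x ◁ .atom b ▷ (y ◁ .atom a ▷ y)) :=
          (right_left_cond_self ..).trans (.symm (.mem ..))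
      _ ≐ s ◁ .atom a ▷ (rA a x ◁ .atom b ▷ (y ◁ .atom a ▷ rA a y)) :=
          congr_right _ _ (congr_right _ _ (ihy _))
      _ ≐ s ◁ .atom a ▷ (rA a x ◁ .atom b ▷ rA a y) := .mem ..
  | case3 x hx => rw [rA.eq_2 a x hx]; exact .refl _

theorem self_mf (P : CS A) : P ≐ mf P := by
  induction P using mf.induct with
  | case1 p a q ihp ihq =>
    rw [mf.eq_1]
    exact (cond_lA a p q).trans ((cond_rA a _ q).trans (.congr ihp (.refl _) ihq))
  | case2 x hx => rw [mf.eq_2 x hx]; exact .refl x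

end CPmem

end CS

theorem stmt17_general {A : Type} [DecidableEq A] (P : CS A) :
    CS.CPmem P (CS.mf P) :=
  CS.CPmem.self_mf P

theorem stmt17 {A : Type} [DecidableEq A] (P : CS A) (hP : CS.IsBasic P) :
    CS.CPmem P (CS.mf P) :=
  stmt17_general P
end
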